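/- ϑ₁(z) = 0 if and only if z ∈ Λ_τ; moreover every zero is simple, i.e., the complex derivative satisfies ϑ₁'(ω) ≠ 0 for every ω ∈ Λ_τ (in particular ϑ₁'(0) ≠ 0). -/

import Mathlib

open Complex Real Filter Topology Asymptotics MeasureTheory

noncomputable def theta1 (τ : ℂ) (z : ℂ) : ℂ :=
  -Complex.I * ∑' n : ℤ,
    (-1 : ℂ) ^ n * Complex.exp ((Real.pi : ℂ) * Complex.I * τ * ((n : ℂ) + 1 / 2) ^ 2) *
      Complex.exp ((2 * (n : ℂ) + 1) * (Real.pi : ℂ) * Complex.I * z)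

def lattice (τ : ℂ) : Set ℂ := {z : ℂ | ∃ m n : ℤ, z = (m : ℂ) + (n : ℂ) * τ}

noncomputable def greenG (τ : ℂ) (z : ℂ) : ℝ :=
  -(1 / (2 * Real.pi)) * Real.log ‖theta1 τ z‖ + z.im ^ 2 / (2 * τ.im)

def cdot (w₁ w₂ : ℂ) : ℝ := (w₁ * (starRingEnd ℂ) w₂).re

noncomputable def grad2 (f : ℂ → ℝ) (z : ℂ) : ℂ :=
  ((deriv (fun x : ℝ => f ((x : ℂ) + (z.im : ℂ) * Complex.I)) z.re : ℝ) : ℂ) +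
    ((deriv (fun y : ℝ => f ((z.re : ℂ) + (y : ℂ) * Complex.I)) z.im : ℝ) : ℂ) * Complex.I

noncomputable def lap2 (f : ℂ → ℝ) (z : ℂ) : ℝ :=
  deriv (deriv (fun x : ℝ => f ((x : ℂ) + (z.im : ℂ) * Complex.I))) z.re +
    deriv (deriv (fun y : ℝ => f ((z.re : ℂ) + (y : ℂ) * Complex.I))) z.im

noncomputable def nuv (γ : ℝ → ℂ) (t : ℝ) : ℂ :=
  ((((deriv γ t).im : ℝ) : ℂ) - (((deriv γ t).re : ℝ) : ℂ) * Complex.I) /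
    ((‖deriv γ t‖ : ℝ) : ℂ)

noncomputable def kappa (γ : ℝ → ℂ) (t : ℝ) : ℝ :=
  ((deriv γ t).re * (deriv (deriv γ) t).im - (deriv γ t).im * (deriv (deriv γ) t).re) /
    ‖deriv γ t‖ ^ 3

noncomputable def dlp (τ : ℂ) (γ : ℝ → ℂ) (φ : ℝ → ℝ) (z : ℂ) : ℝ :=
  ∫ t in (0 : ℝ)..(2 * Real.pi),
    φ t * cdot (-grad2 (greenG τ) (z - γ t)) (nuv γ t) * ‖deriv γ t‖

noncomputable def slp (τ : ℂ) (γ : ℝ → ℂ) (φ : ℝ → ℝ) (z : ℂ) : ℝ :=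
  ∫ t in (0 : ℝ)..(2 * Real.pi),
    greenG τ (z - γ t) * φ t * ‖deriv γ t‖

namespace T1

noncomputable def term (τ z : ℂ) (n : ℤ) : ℂ :=
  (-1 : ℂ) ^ n * Complex.exp ((Real.pi : ℂ) * Complex.I * τ * ((n : ℂ) + 1 / 2) ^ 2) *
      Complex.exp ((2 * (n : ℂ) + 1) * (Real.pi : ℂ) * Complex.I * z)

lemma theta1_eq (τ z : ℂ) : theta1 τ z = -Complex.I * ∑' n : ℤ, term τ z n := rfl

lemma exp_pi_I_int (n : ℤ) : Complex.exp ((Real.pi:ℂ) * Complex.I * n) = (-1 : ℂ) ^ n := by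
  rw [show (Real.pi:ℂ) * Complex.I * n = (n : ℂ) * ((Real.pi:ℂ) * Complex.I) by ring,
    Complex.exp_int_mul, Complex.exp_pi_mul_I]

lemma exp_two_pi_I_int (n : ℤ) : Complex.exp (2 * (Real.pi:ℂ) * Complex.I * n) = 1 := by
  rw [show 2 * (Real.pi:ℂ) * Complex.I * n = (n : ℂ) * (2 * (Real.pi:ℂ) * Complex.I) by ring,
    Complex.exp_int_mul, Complex.exp_two_pi_mul_I, one_zpow]

lemma term_eq_jt (τ z : ℂ) (n : ℤ) :
    term τ z n = Complex.exp ((Real.pi:ℂ) * Complex.I * τ / 4 + (Real.pi:ℂ) * Complex.I * z) *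
      jacobiTheta₂_term n (z + (1 + τ)/2) τ := by
  rw [term, jacobiTheta₂_term, ← exp_pi_I_int n, ← Complex.exp_add, ← Complex.exp_add,
    ← Complex.exp_add]
  congr 1
  ring

lemma theta1_bridge (τ z : ℂ) :
    theta1 τ z = -Complex.I * Complex.exp ((Real.pi:ℂ) * Complex.I * τ / 4 +
      (Real.pi:ℂ) * Complex.I * z) * jacobiTheta₂ (z + (1 + τ)/2) τ := by
  rw [theta1_eq, mul_assoc]
  congr 1
  rw [jacobiTheta₂, ← tsum_mul_left]
  exact tsum_congr (term_eq_jt τ z)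

lemma summable_term {τ : ℂ} (hτ : 0 < τ.im) (z : ℂ) : Summable (term τ z) := by
  have := ((summable_jacobiTheta₂_term_iff (z + (1 + τ)/2) τ).mpr hτ).mul_left
    (Complex.exp ((Real.pi:ℂ) * Complex.I * τ / 4 + (Real.pi:ℂ) * Complex.I * z))
  exact this.congr fun n => (term_eq_jt τ z n).symm

lemma hasDerivAt_theta1 {τ : ℂ} (hτ : 0 < τ.im) (z : ℂ) :
    HasDerivAt (theta1 τ)
      (-Complex.I * Complex.exp ((Real.pi:ℂ) * Complex.I * τ / 4 + (Real.pi:ℂ) * Complex.I * z) *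
        ((Real.pi:ℂ) * Complex.I * jacobiTheta₂ (z + (1 + τ)/2) τ +
          jacobiTheta₂' (z + (1 + τ)/2) τ)) z := by
  have hJ : HasDerivAt (fun z => jacobiTheta₂ (z + (1 + τ)/2) τ)
      (jacobiTheta₂' (z + (1 + τ)/2) τ) z := by
    simpa [Function.comp_def] using (hasDerivAt_jacobiTheta₂_fst (z + (1 + τ)/2) hτ).comp z
      ((hasDerivAt_id z).add_const _)
  have hE : HasDerivAt (fun z : ℂ => Complex.exp ((Real.pi:ℂ) * Complex.I * τ / 4 +
      (Real.pi:ℂ) * Complex.I * z))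
      ((Real.pi:ℂ) * Complex.I * Complex.exp ((Real.pi:ℂ) * Complex.I * τ / 4 +
        (Real.pi:ℂ) * Complex.I * z)) z := by
    have h : HasDerivAt (fun z : ℂ => (Real.pi:ℂ) * Complex.I * τ / 4 +
        (Real.pi:ℂ) * Complex.I * z) ((Real.pi:ℂ) * Complex.I) z := by
      simpa using ((hasDerivAt_id z).const_mul ((Real.pi:ℂ) * Complex.I)).const_add
        ((Real.pi:ℂ) * Complex.I * τ / 4)
    simpa [mul_comm] using h.cexp
  have := ((hE.mul hJ).const_mul (-Complex.I))
  have h2 : HasDerivAt (fun z => theta1 τ z)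
      (-Complex.I * ((Real.pi:ℂ) * Complex.I * Complex.exp ((Real.pi:ℂ) * Complex.I * τ / 4 +
        (Real.pi:ℂ) * Complex.I * z) * jacobiTheta₂ (z + (1 + τ)/2) τ +
        Complex.exp ((Real.pi:ℂ) * Complex.I * τ / 4 + (Real.pi:ℂ) * Complex.I * z) *
          jacobiTheta₂' (z + (1 + τ)/2) τ)) z := by
    refine HasDerivAt.congr_deriv (this.congr_of_eventuallyEq ?_) (by ring)
    filter_upwards with w using (theta1_bridge τ w).trans (by simp only [Pi.mul_apply]; ring)
  exact h2.congr_deriv (by ring)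

lemma theta1_differentiable {τ : ℂ} (hτ : 0 < τ.im) : Differentiable ℂ (theta1 τ) :=
  fun z => (hasDerivAt_theta1 hτ z).differentiableAt

lemma theta1_add_one (τ z : ℂ) : theta1 τ (z + 1) = -theta1 τ z := by
  have h1 : z + 1 + (1 + τ)/2 = (z + (1 + τ)/2) + 1 := by ring
  rw [theta1_bridge, theta1_bridge, h1, jacobiTheta₂_add_left]
  have key : Complex.exp ((Real.pi:ℂ) * Complex.I * τ / 4 + (Real.pi:ℂ) * Complex.I * (z + 1)) =
      Complex.exp ((Real.pi:ℂ) * Complex.I) *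
        Complex.exp ((Real.pi:ℂ) * Complex.I * τ / 4 + (Real.pi:ℂ) * Complex.I * z) := by
    rw [← Complex.exp_add]; congr 1; ring
  rw [key, Complex.exp_pi_mul_I]; ring

lemma theta1_add_tau (τ z : ℂ) : theta1 τ (z + τ) =
    -Complex.exp (-(Real.pi:ℂ) * Complex.I * τ - 2 * (Real.pi:ℂ) * Complex.I * z) *
      theta1 τ z := by
  have h1 : z + τ + (1 + τ)/2 = (z + (1 + τ)/2) + τ := by ring
  rw [theta1_bridge, theta1_bridge, h1, jacobiTheta₂_add_left']
  have key : Complex.exp ((Real.pi:ℂ) * Complex.I * τ / 4 + (Real.pi:ℂ) * Complex.I * (z + τ)) *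
      Complex.exp (-(Real.pi:ℂ) * Complex.I * (τ + 2 * (z + (1 + τ)/2))) =
      Complex.exp (-((Real.pi:ℂ) * Complex.I)) *
        (Complex.exp (-(Real.pi:ℂ) * Complex.I * τ - 2 * (Real.pi:ℂ) * Complex.I * z) *
          Complex.exp ((Real.pi:ℂ) * Complex.I * τ / 4 + (Real.pi:ℂ) * Complex.I * z)) := by
    rw [← Complex.exp_add, ← Complex.exp_add, ← Complex.exp_add]; congr 1; ring
  have hmI : Complex.exp (-((Real.pi:ℂ) * Complex.I)) = -1 := by
    rw [Complex.exp_neg, Complex.exp_pi_mul_I]; norm_num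
  rw [hmI] at key
  linear_combination (-Complex.I * jacobiTheta₂ (z + (1 + τ)/2) τ) * key

lemma term_T (τ z : ℂ) (m n : ℤ) :
    term (τ + m) z n = Complex.exp ((Real.pi:ℂ) * Complex.I * m / 4) * term τ z n := by
  obtain ⟨k, hk⟩ := Int.even_mul_succ_self n
  have hkc : (n:ℂ) * ((n:ℂ) + 1) = (k:ℂ) + (k:ℂ) := by
    have : ((n * (n+1) : ℤ) : ℂ) = ((k + k : ℤ) : ℂ) := by rw [hk]
    push_cast at this; exact_mod_cast this
  have key : (Real.pi:ℂ) * Complex.I * (τ + m) * ((n:ℂ) + 1/2)^2 =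
      (2 * (Real.pi:ℂ) * Complex.I * ((m*k : ℤ):ℂ) + (Real.pi:ℂ) * Complex.I * m / 4) +
        (Real.pi:ℂ) * Complex.I * τ * ((n:ℂ) + 1/2)^2 := by
    push_cast
    linear_combination ((Real.pi:ℂ) * Complex.I * (m:ℂ)) * hkc
  rw [term, term, key, Complex.exp_add, Complex.exp_add, exp_two_pi_I_int (m*k), one_mul]
  ring

lemma theta1_T (τ z : ℂ) (m : ℤ) :
    theta1 (τ + m) z = Complex.exp ((Real.pi:ℂ) * Complex.I * m / 4) * theta1 τ z := by
  rw [theta1_eq, theta1_eq]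
  have : ∑' n : ℤ, term (τ + m) z n =
      Complex.exp ((Real.pi:ℂ) * Complex.I * m / 4) * ∑' n : ℤ, term τ z n := by
    rw [← tsum_mul_left]
    exact tsum_congr (term_T τ z m)
  rw [this]; ring

noncomputable def Sfac (τ z : ℂ) : ℂ :=
  ((Real.pi:ℂ)*Complex.I*τ/4 + (Real.pi:ℂ)*Complex.I*z) +
    (-(Real.pi:ℂ)*Complex.I*(z+(1+τ)/2)^2/τ) +
    (Real.pi:ℂ)*Complex.I*((-1/τ) + 2*((z/τ + (1+(-1/τ))/2) - (-1/τ))) -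
    ((Real.pi:ℂ)*Complex.I*(-1/τ)/4 + (Real.pi:ℂ)*Complex.I*(z/τ))

lemma im_neg_inv (τ : ℂ) (h0 : τ ≠ 0) : (-1/τ).im = τ.im / Complex.normSq τ := by
  rw [div_eq_mul_inv, neg_one_mul, neg_im, inv_im, neg_div, neg_neg]

lemma im_neg_inv_pos {τ : ℂ} (hτ : 0 < τ.im) : 0 < (-1/τ).im := by
  have h0 : τ ≠ 0 := fun h => by simp [h] at hτ
  rw [im_neg_inv τ h0]
  exact div_pos hτ (Complex.normSq_pos.mpr h0)

lemma theta1_S {τ : ℂ} (hτ : 0 < τ.im) (z : ℂ) :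
    theta1 τ z = 1/(-Complex.I*τ)^(1/2:ℂ) * Complex.exp (Sfac τ z) *
      theta1 (-1/τ) (z/τ) := by
  have h0 : τ ≠ 0 := fun h => by simp [h] at hτ
  set τ' : ℂ := -1/τ with hτ'def
  set u : ℂ := z/τ + (1+τ')/2 with hu
  have harg : (z + (1+τ)/2)/τ = u - τ' := by
    rw [hu, hτ'def]; field_simp
    ring
  have h2 : jacobiTheta₂ (u - τ') τ' =
      Complex.exp ((Real.pi:ℂ)*Complex.I*(τ' + 2*(u - τ'))) * jacobiTheta₂ u τ' := by
    have h3 := jacobiTheta₂_add_left' (u - τ') τ'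
    rw [sub_add_cancel] at h3
    rw [h3, ← mul_assoc, ← Complex.exp_add]
    rw [show (Real.pi:ℂ)*Complex.I*(τ' + 2*(u - τ')) + -(Real.pi:ℂ)*Complex.I*(τ' + 2*(u - τ'))
      = 0 by ring, Complex.exp_zero, one_mul]
  rw [theta1_bridge τ z, jacobiTheta₂_functional_equation (z + (1+τ)/2) τ, harg, h2,
    theta1_bridge τ' (z/τ), ← hu]
  have key : Complex.exp ((Real.pi:ℂ)*Complex.I*τ/4 + (Real.pi:ℂ)*Complex.I*z) *
      Complex.exp (-(Real.pi:ℂ)*Complex.I*(z+(1+τ)/2)^2/τ) *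
      Complex.exp ((Real.pi:ℂ)*Complex.I*(τ' + 2*(u - τ'))) =
      Complex.exp (Sfac τ z) *
        Complex.exp ((Real.pi:ℂ)*Complex.I*τ'/4 + (Real.pi:ℂ)*Complex.I*(z/τ)) := by
    rw [← Complex.exp_add, ← Complex.exp_add, ← Complex.exp_add]
    congr 1
    rw [Sfac, hu, hτ'def]
    ring
  linear_combination (-Complex.I * (1/(-Complex.I*τ)^(1/2:ℂ)) * jacobiTheta₂ u τ') * key

lemma neg_I_tau_pow_ne {τ : ℂ} (hτ : 0 < τ.im) : (-Complex.I*τ)^(1/2:ℂ) ≠ 0 := by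
  have hτ0 : τ ≠ 0 := fun h => by simp [h] at hτ
  have h0 : -Complex.I*τ ≠ 0 := mul_ne_zero (neg_ne_zero.mpr Complex.I_ne_zero) hτ0
  rw [Complex.cpow_def_of_ne_zero h0]
  exact Complex.exp_ne_zero _

/-! ### lattice lemmas -/

lemma lattice_zero_mem (τ : ℂ) : (0:ℂ) ∈ lattice τ := ⟨0, 0, by simp⟩

lemma lattice_int_mem (τ : ℂ) (k : ℤ) : (k:ℂ) ∈ lattice τ := ⟨k, 0, by simp⟩

lemma lattice_add_int (τ : ℂ) (m : ℤ) : lattice (τ + m) = lattice τ := by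
  ext z
  constructor
  · rintro ⟨a, b, rfl⟩
    exact ⟨a + b * m, b, by push_cast; ring⟩
  · rintro ⟨a, b, rfl⟩
    exact ⟨a - b * m, b, by push_cast; ring⟩

lemma lattice_add_mem_iff {τ ω : ℂ} (hω : ω ∈ lattice τ) (z : ℂ) :
    z + ω ∈ lattice τ ↔ z ∈ lattice τ := by
  obtain ⟨a, b, rfl⟩ := hω
  constructor
  · rintro ⟨c, d, h⟩
    exact ⟨c - a, d - b, by push_cast; linear_combination h⟩
  · rintro ⟨c, d, rfl⟩
    exact ⟨c + a, d + b, by push_cast; ring⟩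

lemma lattice_strip {τ : ℂ} (hτ : 0 < τ.im) {z : ℂ} (hz : |z.im| ≤ τ.im / 2) :
    z ∈ lattice τ ↔ ∃ k : ℤ, z = (k:ℂ) := by
  constructor
  · rintro ⟨m, n, rfl⟩
    have him : ((m:ℂ) + (n:ℂ)*τ).im = n * τ.im := by
      simp [Complex.add_im, Complex.mul_im]
    rw [him] at hz
    have hn : n = 0 := by
      by_contra hn
      have h1 : (1:ℝ) ≤ |(n:ℝ)| := by
        rw [← Int.cast_abs]
        exact_mod_cast Int.one_le_abs (by simpa using hn)
      have := abs_mul (n:ℝ) τ.im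
      rw [this, abs_of_pos hτ] at hz
      nlinarith
    exact ⟨m, by simp [hn]⟩
  · rintro ⟨k, rfl⟩
    exact lattice_int_mem τ k

lemma lattice_S {τ : ℂ} (hτ : 0 < τ.im) (z : ℂ) :
    z ∈ lattice τ ↔ z/τ ∈ lattice (-1/τ) := by
  have h0 : τ ≠ 0 := fun h => by simp [h] at hτ
  constructor
  · rintro ⟨m, n, rfl⟩
    exact ⟨n, -m, by push_cast; field_simp; ring⟩
  · rintro ⟨m, n, h⟩
    refine ⟨-n, m, ?_⟩
    have : z = (m + n * (-1/τ)) * τ := by rw [← h]; field_simp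
    rw [this]; push_cast; field_simp; ring

/-! ### translation lemmas -/

lemma theta1_add_int (τ : ℂ) (m : ℤ) (z : ℂ) :
    theta1 τ (z + (m:ℂ)) = (-1:ℂ)^m * theta1 τ z := by
  induction m using Int.induction_on with
  | zero => simp
  | succ k ih =>
    have : (z + ((k:ℤ)+1 : ℤ)) = (z + (k:ℤ)) + 1 := by push_cast; ring
    rw [this, theta1_add_one, ih]
    rw [zpow_add₀ (by norm_num : (-1:ℂ) ≠ 0) k 1]
    ring
  | pred k ih =>
    have h1 : z + ((-(k:ℤ)-1 : ℤ):ℂ) + 1 = z + ((-(k:ℤ) : ℤ):ℂ) := by push_cast; ring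
    have h2 := theta1_add_one τ (z + ((-(k:ℤ)-1 : ℤ):ℂ))
    rw [h1, ih] at h2
    have h3 : theta1 τ (z + ((-(k:ℤ)-1 : ℤ):ℂ)) = -((-1:ℂ)^(-(k:ℤ)) * theta1 τ z) := by
      linear_combination h2
    rw [h3, zpow_sub₀ (by norm_num : (-1:ℂ) ≠ 0)]
    simp
    ring

lemma theta1_add_int_tau (τ : ℂ) (n : ℤ) :
    ∃ a b : ℂ, a ≠ 0 ∧ ∀ z, theta1 τ (z + (n:ℂ)*τ) = a * Complex.exp (b*z) * theta1 τ z := by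
  induction n using Int.induction_on with
  | zero => exact ⟨1, 0, one_ne_zero, fun z => by simp⟩
  | succ k ih =>
    obtain ⟨a, b, ha, ih⟩ := ih
    push_cast at ih
    refine ⟨-Complex.exp (-(Real.pi:ℂ)*Complex.I*τ - 2*(Real.pi:ℂ)*Complex.I*((k:ℂ)*τ)) * a,
      b - 2*(Real.pi:ℂ)*Complex.I,
      mul_ne_zero (neg_ne_zero.mpr (Complex.exp_ne_zero _)) ha, fun z => ?_⟩
    have harg : z + (((k:ℤ)+1:ℤ):ℂ)*τ = (z + (k:ℂ)*τ) + τ := by push_cast; ring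
    rw [harg, theta1_add_tau, ih]
    have key : Complex.exp (-(Real.pi:ℂ)*Complex.I*τ - 2*(Real.pi:ℂ)*Complex.I*(z + (k:ℂ)*τ)) *
        Complex.exp (b*z) =
        Complex.exp (-(Real.pi:ℂ)*Complex.I*τ - 2*(Real.pi:ℂ)*Complex.I*((k:ℂ)*τ)) *
          Complex.exp ((b - 2*(Real.pi:ℂ)*Complex.I)*z) := by
      rw [← Complex.exp_add, ← Complex.exp_add]; congr 1; ring
    linear_combination (-(a * theta1 τ z)) * key
  | pred k ih =>
    obtain ⟨a, b, ha, ih⟩ := ih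
    push_cast at ih
    refine ⟨-Complex.exp ((Real.pi:ℂ)*Complex.I*τ - 2*(Real.pi:ℂ)*Complex.I*τ - b*τ) * a,
      b + 2*(Real.pi:ℂ)*Complex.I,
      mul_ne_zero (neg_ne_zero.mpr (Complex.exp_ne_zero _)) ha, fun z => ?_⟩
    have harg : z + ((-(k:ℤ)-1:ℤ):ℂ)*τ = (z - τ) + -(k:ℂ)*τ := by push_cast; ring
    have hprod : Complex.exp ((Real.pi:ℂ)*Complex.I*τ + 2*(Real.pi:ℂ)*Complex.I*(z-τ)) *
        Complex.exp (-(Real.pi:ℂ)*Complex.I*τ - 2*(Real.pi:ℂ)*Complex.I*(z-τ)) = 1 := by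
      rw [← Complex.exp_add, show (Real.pi:ℂ)*Complex.I*τ + 2*(Real.pi:ℂ)*Complex.I*(z-τ) +
        (-(Real.pi:ℂ)*Complex.I*τ - 2*(Real.pi:ℂ)*Complex.I*(z-τ)) = 0 by ring,
        Complex.exp_zero]
    have hzt : theta1 τ (z - τ) =
        -Complex.exp ((Real.pi:ℂ)*Complex.I*τ + 2*(Real.pi:ℂ)*Complex.I*(z-τ)) * theta1 τ z := by
      have h2 := theta1_add_tau τ (z - τ)
      rw [sub_add_cancel] at h2
      rw [h2]
      linear_combination (-(theta1 τ (z - τ))) * hprod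
    rw [harg, ih, hzt]
    have key : Complex.exp (b*(z-τ)) *
        Complex.exp ((Real.pi:ℂ)*Complex.I*τ + 2*(Real.pi:ℂ)*Complex.I*(z-τ)) =
        Complex.exp ((Real.pi:ℂ)*Complex.I*τ - 2*(Real.pi:ℂ)*Complex.I*τ - b*τ) *
          Complex.exp ((b + 2*(Real.pi:ℂ)*Complex.I)*z) := by
      rw [← Complex.exp_add, ← Complex.exp_add]; congr 1; ring
    linear_combination (-(a * theta1 τ z)) * key

lemma theta1_translate (τ : ℂ) {ω : ℂ} (hω : ω ∈ lattice τ) :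
    ∃ a b : ℂ, a ≠ 0 ∧ ∀ z, theta1 τ (z + ω) = a * Complex.exp (b*z) * theta1 τ z := by
  obtain ⟨m, n, rfl⟩ := hω
  obtain ⟨a, b, ha, h⟩ := theta1_add_int_tau τ n
  refine ⟨(-1:ℂ)^m * (a * Complex.exp (b*(m:ℂ))), b,
    mul_ne_zero (zpow_ne_zero _ (by norm_num)) (mul_ne_zero ha (Complex.exp_ne_zero _)),
    fun z => ?_⟩
  have harg : z + ((m:ℂ) + (n:ℂ)*τ) = (z + (m:ℂ)) + (n:ℂ)*τ := by ring
  rw [harg, h, theta1_add_int]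
  rw [show b*(z + (m:ℂ)) = b*(m:ℂ) + b*z by ring, Complex.exp_add]
  ring

lemma sin_mul_nat (m : ℕ) (w : ℂ) :
    Complex.sin ((m:ℂ)*w) = Complex.sin w *
      ∑ k ∈ Finset.range m, Complex.exp (((m:ℂ) - 1 - 2*(k:ℂ)) * w * Complex.I) := by
  rw [Finset.mul_sum]
  have hterm : ∀ k ∈ Finset.range m, Complex.sin w *
      Complex.exp (((m:ℂ) - 1 - 2*(k:ℂ)) * w * Complex.I) =
      (Complex.exp (((m:ℂ) - 2*((k:ℂ)+1)) * w * Complex.I) -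
        Complex.exp (((m:ℂ) - 2*(k:ℂ)) * w * Complex.I)) * Complex.I / 2 := by
    intro k _
    have e1 : Complex.exp (-w * Complex.I) * Complex.exp (((m:ℂ) - 1 - 2*(k:ℂ)) * w * Complex.I)
        = Complex.exp (((m:ℂ) - 2*((k:ℂ)+1)) * w * Complex.I) := by
      rw [← Complex.exp_add]; congr 1; ring
    have e2 : Complex.exp (w * Complex.I) * Complex.exp (((m:ℂ) - 1 - 2*(k:ℂ)) * w * Complex.I)
        = Complex.exp (((m:ℂ) - 2*(k:ℂ)) * w * Complex.I) := by
      rw [← Complex.exp_add]; congr 1; ring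
    unfold Complex.sin
    linear_combination (Complex.I/2) * e1 - (Complex.I/2) * e2
  rw [Finset.sum_congr rfl hterm]
  have htel : ∑ k ∈ Finset.range m,
      (Complex.exp (((m:ℂ) - 2*((k:ℂ)+1)) * w * Complex.I) -
        Complex.exp (((m:ℂ) - 2*(k:ℂ)) * w * Complex.I)) =
      Complex.exp (((m:ℂ) - 2*(m:ℂ)) * w * Complex.I) -
        Complex.exp (((m:ℂ) - 2*(0:ℂ)) * w * Complex.I) := by
    have := Finset.sum_range_sub (fun j : ℕ => Complex.exp (((m:ℂ) - 2*(j:ℂ)) * w * Complex.I)) m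
    simp only [Nat.cast_add, Nat.cast_one, Nat.cast_zero] at this ⊢
    convert this using 2
  rw [← Finset.sum_div, ← Finset.sum_mul, htel]
  unfold Complex.sin
  have e3 : ((m:ℂ) - 2*(m:ℂ)) * w * Complex.I = -((m:ℂ)*w) * Complex.I := by ring
  have e4 : ((m:ℂ) - 2*(0:ℂ)) * w * Complex.I = ((m:ℂ)*w) * Complex.I := by ring
  rw [e3, e4]

lemma norm_exp_real_mul_I (c : ℝ) (w : ℂ) :
    ‖Complex.exp ((c:ℂ) * w * Complex.I)‖ = Real.exp (-(c * w.im)) := by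
  rw [Complex.norm_exp]
  congr 1
  simp [Complex.mul_re, Complex.mul_im]

lemma norm_sin_mul_le (m : ℕ) (hm : 1 ≤ m) (w : ℂ) :
    ‖Complex.sin ((m:ℂ)*w)‖ ≤ (m:ℝ) * Real.exp (((m:ℝ)-1) * |w.im|) * ‖Complex.sin w‖ := by
  rw [sin_mul_nat, norm_mul, mul_comm (‖Complex.sin w‖)]
  rcases eq_or_ne (Complex.sin w) 0 with h|h
  · simp [h]
  apply mul_le_mul_of_nonneg_right _ (norm_nonneg _)
  calc ‖∑ k ∈ Finset.range m, Complex.exp (((m:ℂ) - 1 - 2*(k:ℂ)) * w * Complex.I)‖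
      ≤ ∑ k ∈ Finset.range m, ‖Complex.exp (((m:ℂ) - 1 - 2*(k:ℂ)) * w * Complex.I)‖ :=
        norm_sum_le _ _
    _ ≤ ∑ k ∈ Finset.range m, Real.exp (((m:ℝ)-1) * |w.im|) := by
        apply Finset.sum_le_sum
        intro k hk
        have hcast : ((m:ℂ) - 1 - 2*(k:ℂ)) = (((m:ℝ) - 1 - 2*(k:ℝ) : ℝ) : ℂ) := by push_cast; ring
        rw [hcast, norm_exp_real_mul_I]
        apply Real.exp_le_exp.mpr
        have hk' : (k:ℝ) ≤ (m:ℝ) - 1 := by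
          have := Finset.mem_range.mp hk
          have : (k:ℝ) + 1 ≤ m := by exact_mod_cast this
          linarith
        have h0 : (0:ℝ) ≤ (m:ℝ) - 1 := by
          have : (1:ℝ) ≤ m := by exact_mod_cast hm
          linarith
        calc -(((m:ℝ) - 1 - 2*(k:ℝ)) * w.im) ≤ |((m:ℝ) - 1 - 2*(k:ℝ)) * w.im| := by
              have h1 := neg_abs_le (((m:ℝ) - 1 - 2*(k:ℝ)) * w.im)
              have h2 := le_abs_self (((m:ℝ) - 1 - 2*(k:ℝ)) * w.im)
              linarith
          _ = |(m:ℝ) - 1 - 2*(k:ℝ)| * |w.im| := abs_mul _ _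
          _ ≤ ((m:ℝ)-1) * |w.im| := by
              apply mul_le_mul_of_nonneg_right _ (abs_nonneg _)
              rw [abs_le]
              constructor <;> nlinarith [Nat.cast_nonneg (α := ℝ) k]
    _ = (m:ℝ) * Real.exp (((m:ℝ)-1) * |w.im|) := by
        rw [Finset.sum_const, Finset.card_range, nsmul_eq_mul]

lemma numeric_sum (r : ℝ) (h0 : 0 ≤ r) (hr : r ≤ 1/4) :
    Summable (fun n : ℕ => (2*(n:ℝ)+3) * r^(2*n+1)) ∧
      ∑' n : ℕ, (2*(n:ℝ)+3) * r^(2*n+1) ≤ 188/225 := by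
  have hfun : ∀ (s : ℝ), (fun n : ℕ => (2*(n:ℝ)+3) * s^(2*n+1)) =
      (fun n : ℕ => 2*s*((n:ℝ) * (s^2)^n) + 3*s*(s^2)^n) := by
    intro s; funext n
    rw [pow_succ, pow_mul]
    ring
  have hsum : ∀ (s : ℝ), |s| < 1 → Summable (fun n : ℕ => (2*(n:ℝ)+3) * s^(2*n+1)) := by
    intro s hs
    rw [hfun]
    have hs2 : ‖s^2‖ < 1 := by
      rw [norm_pow]
      exact pow_lt_one₀ (norm_nonneg s) (by rwa [Real.norm_eq_abs]) (by norm_num)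
    have h1 : Summable (fun n : ℕ => (n:ℝ) * (s^2)^n) := by
      have := summable_pow_mul_geometric_of_norm_lt_one 1 hs2
      simpa using this
    have h2 : Summable (fun n : ℕ => (s^2)^n) := summable_geometric_of_norm_lt_one hs2
    exact ((h1.mul_left _).add (h2.mul_left _))
  have habs : |r| < 1 := abs_lt.mpr ⟨by linarith, by linarith⟩
  refine ⟨hsum r habs, ?_⟩
  have hle : ∑' n : ℕ, (2*(n:ℝ)+3) * r^(2*n+1) ≤ ∑' n : ℕ, (2*(n:ℝ)+3) * (1/4:ℝ)^(2*n+1) := by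
    apply Summable.tsum_le_tsum _ (hsum r habs) (hsum (1/4) (abs_lt.mpr ⟨by norm_num, by norm_num⟩))
    intro n
    apply mul_le_mul_of_nonneg_left _ (by positivity)
    exact pow_le_pow_left₀ h0 hr _
  refine hle.trans ?_
  have h116 : ‖(1/16 : ℝ)‖ < 1 := by rw [Real.norm_eq_abs]; exact abs_lt.mpr ⟨by norm_num, by norm_num⟩
  have hv1 : ∑' n : ℕ, (n:ℝ) * (1/16:ℝ)^n = (1/16)/(1-1/16)^2 :=
    tsum_coe_mul_geometric_of_norm_lt_one h116
  have hv2 : ∑' n : ℕ, (1/16:ℝ)^n = (1-1/16)⁻¹ :=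
    tsum_geometric_of_lt_one (by norm_num) (by norm_num)
  have hs1 : Summable (fun n : ℕ => (n:ℝ) * (1/16:ℝ)^n) := by
    have := summable_pow_mul_geometric_of_norm_lt_one 1 h116
    simpa using this
  have hs2 : Summable (fun n : ℕ => (1/16:ℝ)^n) := summable_geometric_of_norm_lt_one h116
  rw [hfun, show ((1/4:ℝ))^2 = 1/16 by norm_num]
  rw [Summable.tsum_add ((hs1.mul_left _)) ((hs2.mul_left _)), tsum_mul_left, tsum_mul_left]
  rw [hv1, hv2]
  norm_num

/-! ### pairing to a sine series -/

noncomputable def gg (τ z : ℂ) (n : ℕ) : ℂ :=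
  2 * (-1:ℂ)^n * Complex.exp ((Real.pi:ℂ)*Complex.I*τ*((n:ℂ)+1/2)^2) *
    Complex.sin ((2*(n:ℂ)+1) * ((Real.pi:ℂ)*z))

lemma pair_g (τ z : ℂ) (n : ℕ) :
    -Complex.I * term τ z (n:ℤ) + -Complex.I * term τ z (-((n:ℤ)+1)) = gg τ z n := by
  have hsq : (-1:ℂ)^((n:ℤ)+1) * (-1:ℂ)^((n:ℤ)+1) = 1 := by
    rw [← mul_zpow]; norm_num
  have hzp : (-1:ℂ)^(-((n:ℤ)+1)) = -(-1:ℂ)^(n:ℕ) := by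
    rw [zpow_neg, inv_eq_of_mul_eq_one_right hsq, zpow_add₀ (by norm_num : (-1:ℂ) ≠ 0),
      zpow_natCast]
    ring
  have hc : Complex.exp ((Real.pi:ℂ)*Complex.I*τ*(((-((n:ℤ)+1)):ℂ)+1/2)^2) =
      Complex.exp ((Real.pi:ℂ)*Complex.I*τ*((n:ℂ)+1/2)^2) := by
    congr 1; push_cast; ring
  have hE : Complex.exp ((2*((-((n:ℤ)+1)):ℂ)+1)*(Real.pi:ℂ)*Complex.I*z) =
      Complex.exp (-((2*(n:ℂ)+1) * ((Real.pi:ℂ)*z) * Complex.I)) := by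
    congr 1; push_cast; ring
  have hE' : Complex.exp ((2*((n:ℤ):ℂ)+1)*(Real.pi:ℂ)*Complex.I*z) =
      Complex.exp (((2*(n:ℂ)+1) * ((Real.pi:ℂ)*z)) * Complex.I) := by
    congr 1; push_cast; ring
  unfold term gg
  rw [hzp, hE']
  rw [show (((-((n:ℤ)+1)):ℤ):ℂ) = ((-((n:ℤ)+1)):ℂ) from by push_cast; ring] at *
  rw [hc, hE, zpow_natCast]
  unfold Complex.sin
  push_cast
  ring

lemma summable_gg {τ : ℂ} (hτ : 0 < τ.im) (z : ℂ) : Summable (gg τ z) := by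
  have hs : Summable (fun n : ℤ => -Complex.I * term τ z n) := (summable_term hτ z).mul_left _
  exact hs.nat_add_neg_add_one.congr (pair_g τ z)

lemma theta1_nat {τ : ℂ} (hτ : 0 < τ.im) (z : ℂ) : theta1 τ z = ∑' n : ℕ, gg τ z n := by
  have hs : Summable (fun n : ℤ => -Complex.I * term τ z n) := (summable_term hτ z).mul_left _
  rw [theta1_eq, ← tsum_mul_left, ← tsum_nat_add_neg_add_one hs]
  exact tsum_congr (pair_g τ z)

lemma theta1_int {τ : ℂ} (hτ : 0 < τ.im) (k : ℤ) : theta1 τ (k:ℂ) = 0 := by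
  rw [theta1_nat hτ]
  have : ∀ n : ℕ, gg τ (k:ℂ) n = 0 := by
    intro n
    have : (2*(n:ℂ)+1) * ((Real.pi:ℂ)*(k:ℂ)) = (((2*(n:ℤ)+1)*k : ℤ):ℂ) * (Real.pi:ℂ) := by
      push_cast; ring
    rw [gg, this, Complex.sin_int_mul_pi, mul_zero]
  rw [tsum_congr this, tsum_zero]

lemma norm_exp_pi_tau (τ : ℂ) (t : ℝ) :
    ‖Complex.exp ((Real.pi:ℂ)*Complex.I*τ*((t:ℂ))^2)‖ = Real.exp (-(Real.pi * τ.im * t^2)) := by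
  rw [Complex.norm_exp]
  congr 1
  have : (Real.pi:ℂ)*Complex.I*τ*((t:ℂ))^2 = ((Real.pi * t^2 : ℝ):ℂ) * (Complex.I * τ) := by
    push_cast; ring
  rw [this]
  simp [Complex.mul_re, Complex.mul_im, ← Complex.ofReal_pow]
  ring

lemma norm_gg (τ z : ℂ) (n : ℕ) :
    ‖gg τ z n‖ = 2 * Real.exp (-(Real.pi * τ.im * ((n:ℝ)+1/2)^2)) *
      ‖Complex.sin ((2*(n:ℂ)+1) * ((Real.pi:ℂ)*z))‖ := by
  have hcast : ((n:ℂ)+1/2) = ((((n:ℝ)+1/2 : ℝ)):ℂ) := by push_cast; ring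
  rw [gg, norm_mul, norm_mul, hcast, norm_exp_pi_tau]
  have h1 : ‖(2:ℂ) * (-1:ℂ)^n‖ = 2 := by
    rw [norm_mul, norm_pow]
    simp
  rw [h1]

lemma im_pi_z (z : ℂ) : ((Real.pi:ℂ)*z).im = Real.pi * z.im := by
  simp [Complex.mul_im]

/-! ### the tail estimate in the strip -/

lemma gg_tail_le {τ z : ℂ} (hτ : 0 < τ.im) (hb : 1/2 ≤ τ.im) (hz : |z.im| ≤ τ.im/2) (n : ℕ) :
    ‖gg τ z (n+1)‖ ≤ (2 * Real.exp (-(Real.pi * τ.im / 4)) * ‖Complex.sin ((Real.pi:ℂ)*z)‖) *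
      ((2*(n:ℝ)+3) * (Real.exp (-(Real.pi * τ.im)))^(2*n+1)) := by
  have hpi := Real.pi_pos
  set b := τ.im with hbdef
  set s := ‖Complex.sin ((Real.pi:ℂ)*z)‖ with hsdef
  have hsin : ‖Complex.sin ((2*((n:ℕ)+1:ℂ)+1) * ((Real.pi:ℂ)*z))‖ ≤
      (2*(n:ℝ)+3) * Real.exp ((2*(n:ℝ)+2) * (Real.pi * |z.im|)) * s := by
    have harg : (2*((n:ℕ)+1:ℂ)+1) * ((Real.pi:ℂ)*z) = (((2*n+3 : ℕ)):ℂ) * ((Real.pi:ℂ)*z) := by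
      push_cast; ring
    have h := norm_sin_mul_le (2*n+3) (by omega) ((Real.pi:ℂ)*z)
    rw [harg]
    refine h.trans (le_of_eq ?_)
    rw [im_pi_z]
    have : |Real.pi * z.im| = Real.pi * |z.im| := by
      rw [abs_mul, abs_of_pos hpi]
    rw [this]
    push_cast
    rw [hsdef]; ring
  have hexp : Real.exp (-(Real.pi * b * (((n+1:ℕ):ℝ)+1/2)^2)) *
      Real.exp ((2*(n:ℝ)+2) * (Real.pi * |z.im|)) ≤
      Real.exp (-(Real.pi * b / 4)) * (Real.exp (-(Real.pi * b)))^(2*n+1) := by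
    rw [← Real.exp_add]
    have hpow : (Real.exp (-(Real.pi * b)))^(2*n+1) = Real.exp (-(Real.pi*b) * (2*n+1)) := by
      rw [← Real.exp_nat_mul]
      congr 1
      push_cast; ring
    rw [hpow, ← Real.exp_add]
    apply Real.exp_le_exp.mpr
    have h1 : (2*(n:ℝ)+2) * (Real.pi * |z.im|) ≤ (2*(n:ℝ)+2) * (Real.pi * (b/2)) := by
      apply mul_le_mul_of_nonneg_left _ (by positivity)
      exact mul_le_mul_of_nonneg_left hz (le_of_lt hpi)
    have hsq : ((n:ℝ)+1)^2 ≥ 2*(n:ℝ)+1 := by nlinarith [sq_nonneg ((n:ℝ))]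
    have hcast : (((n+1:ℕ):ℝ)+1/2) = (n:ℝ) + 3/2 := by push_cast; ring
    rw [hcast]
    have hπb : 0 < Real.pi * b := mul_pos hpi (by linarith)
    calc -(Real.pi * b * ((n:ℝ)+3/2)^2) + (2*(n:ℝ)+2) * (Real.pi * |z.im|)
        ≤ -(Real.pi * b * ((n:ℝ)+3/2)^2) + (2*(n:ℝ)+2) * (Real.pi * (b/2)) := by linarith [h1]
      _ = -(Real.pi * b / 4) + (-(Real.pi*b) * (((n:ℝ)+1)^2)) := by ring
      _ ≤ -(Real.pi * b / 4) + (-(Real.pi*b) * ((2*(n:ℝ)+1))) := by nlinarith [hπb, hsq]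
  calc ‖gg τ z (n+1)‖
      = 2 * Real.exp (-(Real.pi * b * (((n+1:ℕ):ℝ)+1/2)^2)) *
        ‖Complex.sin ((2*((n+1:ℕ):ℂ)+1) * ((Real.pi:ℂ)*z))‖ := norm_gg τ z (n+1)
    _ ≤ 2 * Real.exp (-(Real.pi * b * (((n+1:ℕ):ℝ)+1/2)^2)) *
        ((2*(n:ℝ)+3) * Real.exp ((2*(n:ℝ)+2) * (Real.pi * |z.im|)) * s) := by
        apply mul_le_mul_of_nonneg_left _ (by positivity)
        exact_mod_cast hsin
    _ = (2*(n:ℝ)+3) * (Real.exp (-(Real.pi * b * (((n+1:ℕ):ℝ)+1/2)^2)) *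
        Real.exp ((2*(n:ℝ)+2) * (Real.pi * |z.im|))) * (2 * s) := by ring
    _ ≤ (2*(n:ℝ)+3) * (Real.exp (-(Real.pi * b / 4)) * (Real.exp (-(Real.pi * b)))^(2*n+1)) *
        (2 * s) := by
        apply mul_le_mul_of_nonneg_right _ (by positivity)
        exact mul_le_mul_of_nonneg_left hexp (by positivity)
    _ = (2 * Real.exp (-(Real.pi * b / 4)) * s) *
        ((2*(n:ℝ)+3) * (Real.exp (-(Real.pi * b)))^(2*n+1)) := by ring



lemma r_le_quarter {τ : ℂ} (hb : 1/2 ≤ τ.im) : Real.exp (-(Real.pi * τ.im)) ≤ 1/4 := by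
  have hpi3 := Real.pi_gt_three
  have h4 : (4:ℝ) ≤ Real.exp (3/2) := by
    have h1 : (3/2:ℝ) ≤ Real.exp (1/2) := by
      have := Real.add_one_le_exp (1/2:ℝ); linarith
    have h2 : (2.7182818:ℝ) ≤ Real.exp 1 := by
      have := Real.exp_one_gt_d9; norm_num at this ⊢; linarith
    have h3 : Real.exp (3/2) = Real.exp 1 * Real.exp (1/2) := by
      rw [← Real.exp_add]; norm_num
    nlinarith [Real.exp_pos (1/2:ℝ), Real.exp_pos (1:ℝ)]
  have h5 : Real.exp (-(Real.pi * τ.im)) ≤ Real.exp (-(3/2)) := by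
    apply Real.exp_le_exp.mpr
    nlinarith
  refine h5.trans ?_
  rw [Real.exp_neg]
  have hE : 0 < Real.exp (3/2) := Real.exp_pos _
  have hinv : Real.exp (3/2) * (Real.exp (3/2))⁻¹ = 1 := mul_inv_cancel₀ (ne_of_gt hE)
  nlinarith [inv_pos.mpr hE]

lemma strip_sin_zero {τ z : ℂ} (hτ : 0 < τ.im) (hb : 1/2 ≤ τ.im) (hz : |z.im| ≤ τ.im/2)
    (h0 : theta1 τ z = 0) : Complex.sin ((Real.pi:ℂ)*z) = 0 := by
  have hpi := Real.pi_pos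
  set b := τ.im with hbdef
  set s := ‖Complex.sin ((Real.pi:ℂ)*z)‖ with hsdef
  set r := Real.exp (-(Real.pi * b)) with hrdef
  set E := Real.exp (-(Real.pi * b / 4)) with hEdef
  have hr4 : r ≤ 1/4 := r_le_quarter hb
  have hr0 : 0 ≤ r := le_of_lt (Real.exp_pos _)
  obtain ⟨hnumS, hnumB⟩ := numeric_sum r hr0 hr4
  have hsg := summable_gg hτ z
  have hsplit : ∑' n : ℕ, gg τ z n = gg τ z 0 + ∑' n : ℕ, gg τ z (n+1) :=
    Summable.tsum_eq_zero_add hsg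
  have htail0 : gg τ z 0 = -∑' n : ℕ, gg τ z (n+1) := by
    have := (theta1_nat hτ z).symm.trans h0
    rw [hsplit] at this
    linear_combination this
  have hsum1 : Summable (fun n : ℕ => gg τ z (n+1)) := by
    exact (summable_nat_add_iff 1).mpr hsg
  have hnorm : ‖∑' n : ℕ, gg τ z (n+1)‖ ≤ (2 * E * s) * (188/225) := by
    have hns : Summable (fun n : ℕ => ‖gg τ z (n+1)‖) := by
      rw [summable_norm_iff]; exact hsum1
    refine (norm_tsum_le_tsum_norm hns).trans ?_
    have hle : ∀ n : ℕ, ‖gg τ z (n+1)‖ ≤ (2 * E * s) * ((2*(n:ℝ)+3) * r^(2*n+1)) :=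
      gg_tail_le hτ hb hz
    refine (Summable.tsum_le_tsum hle hns (hnumS.mul_left _)).trans ?_
    rw [tsum_mul_left]
    apply mul_le_mul_of_nonneg_left hnumB (by positivity)
  have hgg0 : ‖gg τ z 0‖ = 2 * E * s := by
    rw [norm_gg]
    have h1 : -(Real.pi * b * (((0:ℕ):ℝ)+1/2)^2) = -(Real.pi * b / 4) := by norm_num; ring
    have h2 : (2*((0:ℕ):ℂ)+1) * ((Real.pi:ℂ)*z) = (Real.pi:ℂ)*z := by norm_num
    rw [h1, h2]
  have hfinal : 2 * E * s ≤ (2 * E * s) * (188/225) := by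
    calc 2 * E * s = ‖gg τ z 0‖ := hgg0.symm
      _ = ‖∑' n : ℕ, gg τ z (n+1)‖ := by rw [htail0, norm_neg]
      _ ≤ (2 * E * s) * (188/225) := hnorm
  have hE0 : 0 < E := Real.exp_pos _
  have hs0 : 0 ≤ s := norm_nonneg _
  have : s = 0 := by nlinarith
  exact norm_eq_zero.mp this


/-! ### base case: zeros -/

lemma base_zero_iff {τ : ℂ} (hτ : 0 < τ.im) (hb : 1/2 ≤ τ.im) (z : ℂ) :
    theta1 τ z = 0 ↔ z ∈ lattice τ := by
  set n : ℤ := round (z.im / τ.im) with hn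
  set z₀ : ℂ := z - (n:ℂ)*τ with hz₀
  have hz : z = z₀ + (n:ℂ)*τ := by rw [hz₀]; ring
  have him : |z₀.im| ≤ τ.im / 2 := by
    have h1 : |z.im / τ.im - (n:ℝ)| ≤ 1/2 := abs_sub_round _
    have h2 : z₀.im = z.im - n * τ.im := by
      rw [hz₀]; simp [Complex.sub_im, Complex.mul_im]
    have h3 : z.im - n*τ.im = (z.im/τ.im - n) * τ.im := by field_simp
    rw [h2, h3, abs_mul, abs_of_pos hτ]
    calc |z.im/τ.im - (n:ℝ)| * τ.im ≤ (1/2) * τ.im :=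
          mul_le_mul_of_nonneg_right h1 (le_of_lt hτ)
      _ = τ.im / 2 := by ring
  have hmem : (n:ℂ)*τ ∈ lattice τ := ⟨0, n, by simp⟩
  obtain ⟨a, c, ha, htr⟩ := theta1_translate τ hmem
  have e1 : theta1 τ z = 0 ↔ theta1 τ z₀ = 0 := by
    rw [hz, htr]
    simp [ha, Complex.exp_ne_zero]
  have e2 : theta1 τ z₀ = 0 ↔ ∃ k : ℤ, z₀ = (k:ℂ) := by
    constructor
    · intro h
      have hs := strip_sin_zero hτ hb him h
      rw [Complex.sin_eq_zero_iff] at hs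
      obtain ⟨k, hk⟩ := hs
      refine ⟨k, ?_⟩
      have hpi : ((Real.pi:ℝ):ℂ) ≠ 0 :=
        Complex.ofReal_ne_zero.mpr (ne_of_gt Real.pi_pos)
      have h2 : ((Real.pi:ℝ):ℂ) * z₀ = ((Real.pi:ℝ):ℂ) * (k:ℂ) := by rw [hk]; ring
      exact mul_left_cancel₀ hpi h2
    · rintro ⟨k, hk⟩
      rw [hk]
      exact theta1_int hτ k
  have e3 : (∃ k : ℤ, z₀ = (k:ℂ)) ↔ z₀ ∈ lattice τ := (lattice_strip hτ him).symm
  have e4 : z₀ ∈ lattice τ ↔ z ∈ lattice τ := by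
    rw [hz]
    exact (lattice_add_mem_iff hmem z₀).symm
  exact e1.trans (e2.trans (e3.trans e4))

/-! ### base case: derivative at 0 -/

lemma base_deriv_ne {τ : ℂ} (hτ : 0 < τ.im) (hb : 1/2 ≤ τ.im) :
    deriv (theta1 τ) 0 ≠ 0 := by
  have hpi := Real.pi_pos
  set b := τ.im with hbdef
  set w₀ : ℂ := (0:ℂ) + (1+τ)/2 with hw₀
  have hw₀im : w₀.im = b/2 := by
    rw [hw₀]
    simp [Complex.add_im, Complex.div_im, Complex.normSq, hbdef]
  set k : ℤ → ℂ := fun n => (Real.pi:ℂ)*Complex.I*jacobiTheta₂_term n w₀ τ +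
    jacobiTheta₂'_term n w₀ τ with hkdef
  have hs : Summable (fun n : ℤ => jacobiTheta₂_term n w₀ τ) :=
    (summable_jacobiTheta₂_term_iff w₀ τ).mpr hτ
  have hs' : Summable (fun n : ℤ => jacobiTheta₂'_term n w₀ τ) :=
    (summable_jacobiTheta₂'_term_iff w₀ τ).mpr hτ
  have hks : Summable k := (hs.mul_left _).add hs'
  set X : ℂ := (Real.pi:ℂ)*Complex.I*jacobiTheta₂ w₀ τ + jacobiTheta₂' w₀ τ with hX
  have hXsum : X = ∑' n : ℤ, k n := by
    rw [hX, jacobiTheta₂, jacobiTheta₂', ← tsum_mul_left,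
      ← Summable.tsum_add (hs.mul_left _) hs']
  -- pairing
  set K : ℕ → ℂ := fun n => k n + k (-((n:ℤ)+1)) with hKdef
  have hKs : Summable K := hks.nat_add_neg_add_one
  have hXK : X = ∑' n : ℕ, K n := by
    rw [hXsum, ← tsum_nat_add_neg_add_one hks]
  have hK0 : K 0 = 2*(Real.pi:ℂ)*Complex.I := by
    have ht0 : jacobiTheta₂_term 0 w₀ τ = 1 := by
      rw [jacobiTheta₂_term]
      norm_num
    have ht1 : jacobiTheta₂_term (-1) w₀ τ = -1 := by
      rw [jacobiTheta₂_term]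
      have : 2*(Real.pi:ℂ)*Complex.I*((-1:ℤ):ℂ)*w₀ + (Real.pi:ℂ)*Complex.I*((-1:ℤ):ℂ)^2*τ =
          -((Real.pi:ℂ)*Complex.I) := by
        rw [hw₀]; push_cast; ring
      rw [this, Complex.exp_neg, Complex.exp_pi_mul_I]
      norm_num
    have hkt0 : k 0 = (Real.pi:ℂ)*Complex.I := by
      rw [hkdef]
      simp only []
      rw [jacobiTheta₂'_term, ht0]
      push_cast
      ring
    have hkt1 : k (-1) = (Real.pi:ℂ)*Complex.I := by
      rw [hkdef]
      simp only []
      rw [jacobiTheta₂'_term, ht1]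
      push_cast
      ring
    rw [hKdef]
    simp only []
    norm_num
    rw [hkt0, hkt1]
    ring
  -- tail bound
  set r : ℝ := Real.exp (-(Real.pi * b)) with hrdef
  have hr4 : r ≤ 1/4 := r_le_quarter hb
  have hr0 : 0 ≤ r := le_of_lt (Real.exp_pos _)
  obtain ⟨hnumS, hnumB⟩ := numeric_sum r hr0 hr4
  have hk_abs : ∀ m : ℤ, ‖k m‖ =
      Real.pi * |2*(m:ℝ)+1| * Real.exp (-(Real.pi*b)*((m:ℝ)^2+(m:ℝ))) := by
    intro m
    have hk_eq : k m = (((Real.pi*(2*(m:ℝ)+1)):ℝ):ℂ)*Complex.I*jacobiTheta₂_term m w₀ τ := by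
      rw [hkdef]
      simp only []
      rw [jacobiTheta₂'_term]
      push_cast
      ring
    rw [hk_eq, norm_mul, norm_mul, Complex.norm_I, mul_one, Complex.norm_real,
      Real.norm_eq_abs, norm_jacobiTheta₂_term, hw₀im, abs_mul, abs_of_pos hpi]
    congr 1
    ring_nf
    rw [← hbdef]
  have hpowle : ∀ n : ℕ, Real.exp (-(Real.pi*b)*((((n:ℝ)+1))^2+((n:ℝ)+1))) ≤ r^(2*n+1) := by
    intro n
    have hval : Real.exp (-(Real.pi*b)*((((n:ℝ)+1))^2+((n:ℝ)+1))) = r^((n+1)*(n+2)) := by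
      rw [hrdef, ← Real.exp_nat_mul]
      congr 1
      push_cast
      ring
    rw [hval]
    apply pow_le_pow_of_le_one hr0 (hr4.trans (by norm_num))
    nlinarith
  have hKtail : ∀ n : ℕ, ‖K (n+1)‖ ≤ (2*Real.pi) * ((2*(n:ℝ)+3) * r^(2*n+1)) := by
    intro n
    have e1 : ‖k (((n+1:ℕ)):ℤ)‖ ≤ Real.pi * ((2*(n:ℝ)+3) * r^(2*n+1)) := by
      rw [hk_abs]
      have habs : |2*((((n+1:ℕ)):ℤ):ℝ)+1| = 2*(n:ℝ)+3 := by
        rw [_root_.abs_of_nonneg (by push_cast; positivity)]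
        push_cast; ring
      have hexp : ((((n+1:ℕ)):ℤ):ℝ)^2 + ((((n+1:ℕ)):ℤ):ℝ) = (((n:ℝ)+1))^2+((n:ℝ)+1) := by
        push_cast; ring
      rw [habs, hexp, mul_assoc]
      exact mul_le_mul_of_nonneg_left (mul_le_mul_of_nonneg_left (hpowle n)
        (by positivity)) (le_of_lt hpi)
    have e2 : ‖k (-((((n+1:ℕ)):ℤ))-1)‖ ≤ Real.pi * ((2*(n:ℝ)+3) * r^(2*n+1)) := by
      rw [hk_abs]
      have habs : |2*((-((((n+1:ℕ)):ℤ))-1:ℤ):ℝ)+1| = 2*(n:ℝ)+3 := by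
        push_cast
        rw [show 2*(-((n:ℝ)+1)-1)+1 = -(2*(n:ℝ)+3) by ring, abs_neg,
          _root_.abs_of_nonneg (by positivity)]
      have hexp : ((-((((n+1:ℕ)):ℤ))-1:ℤ):ℝ)^2 + ((-((((n+1:ℕ)):ℤ))-1:ℤ):ℝ) =
          (((n:ℝ)+1))^2+((n:ℝ)+1) := by
        push_cast; ring
      rw [habs, hexp, mul_assoc]
      exact mul_le_mul_of_nonneg_left (mul_le_mul_of_nonneg_left (hpowle n)
        (by positivity)) (le_of_lt hpi)
    have hKval : K (n+1) = k (((n+1:ℕ)):ℤ) + k (-((((n+1:ℕ)):ℤ))-1) := by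
      have harg : (-((((n+1:ℕ)):ℤ))-1 : ℤ) = -((((n+1:ℕ)):ℤ)+1) := by ring
      rw [hKdef]
      simp only []
      rw [harg]
    rw [hKval]
    calc ‖k (((n+1:ℕ)):ℤ) + k (-((((n+1:ℕ)):ℤ))-1)‖
        ≤ ‖k (((n+1:ℕ)):ℤ)‖ + ‖k (-((((n+1:ℕ)):ℤ))-1)‖ := norm_add_le _ _
      _ ≤ (2*Real.pi) * ((2*(n:ℝ)+3) * r^(2*n+1)) := by linarith
  -- conclude X ≠ 0
  have hK0norm : ‖K 0‖ = 2*Real.pi := by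
    rw [hK0, show 2*(Real.pi:ℂ)*Complex.I = (((2*Real.pi:ℝ)):ℂ)*Complex.I by push_cast; ring,
      norm_mul, Complex.norm_I, mul_one, Complex.norm_real, Real.norm_eq_abs,
      abs_of_pos (by positivity)]
  have hsum1 : Summable (fun n : ℕ => K (n+1)) := (summable_nat_add_iff 1).mpr hKs
  have hXne : X ≠ 0 := by
    intro h0
    have hsplit : ∑' n : ℕ, K n = K 0 + ∑' n : ℕ, K (n+1) := Summable.tsum_eq_zero_add hKs
    have htail0 : K 0 = -∑' n : ℕ, K (n+1) := by
      have := hXK.symm.trans h0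
      rw [hsplit] at this
      linear_combination this
    have hns : Summable (fun n : ℕ => ‖K (n+1)‖) := by
      rw [summable_norm_iff]; exact hsum1
    have hnorm : ‖∑' n : ℕ, K (n+1)‖ ≤ (2*Real.pi) * (188/225) := by
      refine (norm_tsum_le_tsum_norm hns).trans ?_
      refine (Summable.tsum_le_tsum hKtail hns (hnumS.mul_left _)).trans ?_
      rw [tsum_mul_left]
      exact mul_le_mul_of_nonneg_left hnumB (by positivity)
    have : 2*Real.pi ≤ (2*Real.pi) * (188/225) := by
      calc 2*Real.pi = ‖K 0‖ := hK0norm.symm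
        _ = ‖∑' n : ℕ, K (n+1)‖ := by rw [htail0, norm_neg]
        _ ≤ (2*Real.pi) * (188/225) := hnorm
    nlinarith
  have hderiv : deriv (theta1 τ) 0 = -Complex.I *
      Complex.exp ((Real.pi:ℂ)*Complex.I*τ/4 + (Real.pi:ℂ)*Complex.I*(0:ℂ)) * X :=
    (hasDerivAt_theta1 hτ 0).deriv
  rw [hderiv]
  simp only [mul_ne_zero_iff, neg_ne_zero]
  exact ⟨⟨Complex.I_ne_zero, Complex.exp_ne_zero _⟩, hXne⟩


/-! ### the main property and its transports -/

def Pprop (τ : ℂ) : Prop :=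
  (∀ z, theta1 τ z = 0 ↔ z ∈ lattice τ) ∧ deriv (theta1 τ) 0 ≠ 0

lemma Pprop_base {τ : ℂ} (hτ : 0 < τ.im) (hb : 1/2 ≤ τ.im) : Pprop τ :=
  ⟨base_zero_iff hτ hb, base_deriv_ne hτ hb⟩

lemma Pprop_T {τ : ℂ} (hτ : 0 < τ.im) (m : ℤ) (h : Pprop τ) : Pprop (τ + (m:ℂ)) := by
  obtain ⟨h1, h2⟩ := h
  constructor
  · intro z
    rw [theta1_T, lattice_add_int, mul_eq_zero]
    simp only [Complex.exp_ne_zero, false_or]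
    exact h1 z
  · have hfun : theta1 (τ + (m:ℂ)) =
        fun z => Complex.exp ((Real.pi:ℂ)*Complex.I*m/4) * theta1 τ z :=
      funext (fun z => theta1_T τ z m)
    rw [hfun, deriv_const_mul _ ((theta1_differentiable hτ) 0)]
    exact mul_ne_zero (Complex.exp_ne_zero _) h2

lemma Pprop_S {τ : ℂ} (hτ : 0 < τ.im) (h : Pprop (-1/τ)) : Pprop τ := by
  have hτ' : 0 < (-1/τ).im := im_neg_inv_pos hτ
  have hτ0 : τ ≠ 0 := fun hh => by simp [hh] at hτ
  obtain ⟨h1, h2⟩ := h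
  have hK : (1:ℂ)/(-Complex.I*τ)^(1/2:ℂ) ≠ 0 := one_div_ne_zero (neg_I_tau_pow_ne hτ)
  have hzero : ∀ z, theta1 τ z = 0 ↔ z ∈ lattice τ := by
    intro z
    rw [theta1_S hτ z, mul_eq_zero, mul_eq_zero]
    simp only [hK, Complex.exp_ne_zero, false_or, or_iff_right_iff_imp]
    rw [h1 (z/τ), ← lattice_S hτ z]
  refine ⟨hzero, ?_⟩
  have hθ0 : theta1 (-1/τ) ((0:ℂ)/τ) = 0 := by
    rw [zero_div]
    exact (h1 0).mpr (lattice_zero_mem _)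
  have hEd : HasDerivAt (fun z => Complex.exp (Sfac τ z))
      (deriv (fun z => Complex.exp (Sfac τ z)) 0) 0 := by
    apply DifferentiableAt.hasDerivAt
    apply DifferentiableAt.cexp
    unfold Sfac
    fun_prop
  have hθd : HasDerivAt (theta1 (-1/τ)) (deriv (theta1 (-1/τ)) 0) ((0:ℂ)/τ) := by
    rw [zero_div]
    exact ((theta1_differentiable hτ') 0).hasDerivAt
  have hin : HasDerivAt (fun z : ℂ => z/τ) τ⁻¹ 0 := by
    simpa [div_eq_mul_inv] using (hasDerivAt_id (0:ℂ)).mul_const τ⁻¹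
  have hcomp : HasDerivAt (fun z : ℂ => theta1 (-1/τ) (z/τ))
      (deriv (theta1 (-1/τ)) 0 * τ⁻¹) 0 := by
    simpa [Function.comp_def] using hθd.comp (0:ℂ) hin
  have hG : HasDerivAt (fun z => 1/(-Complex.I*τ)^(1/2:ℂ) * Complex.exp (Sfac τ z) *
      theta1 (-1/τ) (z/τ))
      (1/(-Complex.I*τ)^(1/2:ℂ) * (deriv (fun z => Complex.exp (Sfac τ z)) 0 *
        theta1 (-1/τ) ((0:ℂ)/τ) + Complex.exp (Sfac τ 0) * (deriv (theta1 (-1/τ)) 0 * τ⁻¹)))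
      0 := by
    have h0 := (hEd.mul hcomp).const_mul (1/(-Complex.I*τ)^(1/2:ℂ))
    have h1 := h0.congr_deriv (by ring : 1/(-Complex.I*τ)^(1/2:ℂ) *
      (deriv (fun z => Complex.exp (Sfac τ z)) 0 * theta1 (-1/τ) ((0:ℂ)/τ) +
        Complex.exp (Sfac τ 0) * (deriv (theta1 (-1/τ)) 0 * τ⁻¹)) =
      1/(-Complex.I*τ)^(1/2:ℂ) * (deriv (fun z => Complex.exp (Sfac τ z)) 0 *
        theta1 (-1/τ) ((0:ℂ)/τ) + Complex.exp (Sfac τ 0) * (deriv (theta1 (-1/τ)) 0 * τ⁻¹)))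
    exact (h0.congr_deriv (by ring)).congr_of_eventuallyEq
      (by filter_upwards with w using by simp only [Pi.mul_apply]; ring)
  have hderiv : deriv (theta1 τ) 0 = 1/(-Complex.I*τ)^(1/2:ℂ) *
      (deriv (fun z => Complex.exp (Sfac τ z)) 0 * theta1 (-1/τ) ((0:ℂ)/τ) +
        Complex.exp (Sfac τ 0) * (deriv (theta1 (-1/τ)) 0 * τ⁻¹)) := by
    have hfun : theta1 τ = fun z => 1/(-Complex.I*τ)^(1/2:ℂ) * Complex.exp (Sfac τ z) *
        theta1 (-1/τ) (z/τ) := funext (fun z => theta1_S hτ z)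
    rw [hfun]
    exact hG.deriv
  rw [hderiv, hθ0, mul_zero, zero_add]
  exact mul_ne_zero hK (mul_ne_zero (Complex.exp_ne_zero _)
    (mul_ne_zero h2 (inv_ne_zero hτ0)))

lemma Pprop_main : ∀ N : ℕ, ∀ τ : ℂ, 0 < τ.im → 1/2 ≤ 2^N * τ.im → Pprop τ := by
  intro N
  induction N with
  | zero =>
    intro τ h1 h2
    exact Pprop_base h1 (by simpa using h2)
  | succ n ih =>
    intro τ hτ hN
    rcases le_or_gt (1/2) τ.im with hb | hb
    · exact Pprop_base hτ hb
    · set m : ℤ := -round τ.re with hm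
      set τ₁ : ℂ := τ + (m:ℂ) with hτ₁def
      have hτ₁im : τ₁.im = τ.im := by simp [hτ₁def, Complex.add_im]
      have hτ₁pos : 0 < τ₁.im := by rwa [hτ₁im]
      have hre : |τ₁.re| ≤ 1/2 := by
        have h1 : τ₁.re = τ.re - round τ.re := by
          simp only [hτ₁def, hm, Complex.add_re, Complex.intCast_re]
          push_cast
          ring
        rw [h1]
        exact abs_sub_round _
      have hns : Complex.normSq τ₁ ≤ 1/2 := by
        rw [Complex.normSq_apply]
        have h2 : τ₁.re^2 ≤ (1/2)^2 := sq_le_sq' (by linarith [abs_le.mp hre]) (abs_le.mp hre).2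
        have h3 : τ₁.im^2 ≤ (1/2)^2 := by
          rw [hτ₁im]
          nlinarith
        nlinarith
      have hτ₁0 : τ₁ ≠ 0 := fun hh => by simp [hh] at hτ₁pos
      have hns0 : 0 < Complex.normSq τ₁ := Complex.normSq_pos.mpr hτ₁0
      have hτ₂im : (-1/τ₁).im = τ₁.im / Complex.normSq τ₁ := im_neg_inv τ₁ hτ₁0
      have hτ₂pos : 0 < (-1/τ₁).im := im_neg_inv_pos hτ₁pos
      have hdouble : 2 * τ.im ≤ (-1/τ₁).im := by
        rw [hτ₂im, hτ₁im, le_div_iff₀ hns0]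
        nlinarith
      have h2N : 1/2 ≤ 2^n * (-1/τ₁).im := by
        have hpow : (0:ℝ) < 2^n := by positivity
        have : (2:ℝ)^(n+1) * τ.im = 2^n * (2*τ.im) := by ring
        nlinarith
      have hP2 : Pprop (-1/τ₁) := ih (-1/τ₁) hτ₂pos h2N
      have hP1 : Pprop τ₁ := Pprop_S hτ₁pos hP2
      have hP0 : Pprop (τ₁ + ((-m:ℤ):ℂ)) := Pprop_T hτ₁pos (-m) hP1
      have heq : τ₁ + ((-m:ℤ):ℂ) = τ := by
        rw [hτ₁def]; push_cast; ring
      rwa [heq] at hP0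

end T1


theorem stmt1 (τ : ℂ) (hτ : 0 < τ.im) :
    (∀ z : ℂ, theta1 τ z = 0 ↔ z ∈ lattice τ) ∧
    (∀ ω ∈ lattice τ, deriv (theta1 τ) ω ≠ 0) := by
  obtain ⟨N, hN⟩ : ∃ N:ℕ, 1/2 ≤ 2^N * τ.im := by
    obtain ⟨N, hN⟩ := pow_unbounded_of_one_lt ((1/2)/τ.im) (by norm_num : (1:ℝ) < 2)
    refine ⟨N, ?_⟩
    rw [div_lt_iff₀ hτ] at hN
    nlinarith
  have hP := T1.Pprop_main N τ hτ hN
  refine ⟨hP.1, ?_⟩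
  intro ω hω
  obtain ⟨a, c, ha, htr⟩ := T1.theta1_translate τ hω
  have hθ0 : theta1 τ 0 = 0 := (hP.1 0).mpr (T1.lattice_zero_mem τ)
  have hL : HasDerivAt (fun z => theta1 τ (z + ω)) (deriv (theta1 τ) ω) 0 := by
    have hθω : HasDerivAt (theta1 τ) (deriv (theta1 τ) ω) ((0:ℂ) + ω) := by
      rw [zero_add]
      exact ((T1.theta1_differentiable hτ) ω).hasDerivAt
    have hadd : HasDerivAt (fun z : ℂ => z + ω) 1 0 := (hasDerivAt_id (0:ℂ)).add_const ω
    simpa [Function.comp_def] using HasDerivAt.comp 0 hθω hadd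
  have hθd : HasDerivAt (theta1 τ) (deriv (theta1 τ) 0) 0 :=
    ((T1.theta1_differentiable hτ) 0).hasDerivAt
  have hce : HasDerivAt (fun z : ℂ => Complex.exp (c*z)) (c * Complex.exp (c*(0:ℂ))) 0 := by
    have h1 : HasDerivAt (fun z : ℂ => c*z) c 0 := by
      simpa using (hasDerivAt_id (0:ℂ)).const_mul c
    simpa [mul_comm] using h1.cexp
  have hR : HasDerivAt (fun z => a * Complex.exp (c*z) * theta1 τ z)
      (a * deriv (theta1 τ) 0) 0 := by
    have h0 := (hce.mul hθd).const_mul a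
    have h1 : HasDerivAt (fun y => a * (Complex.exp (c*y) * theta1 τ y))
        (a * deriv (theta1 τ) 0) 0 := by
      refine h0.congr_deriv ?_
      rw [hθ0]
      simp
    exact h1.congr_of_eventuallyEq (by filter_upwards with w using by ring)
  have huniq : deriv (theta1 τ) ω = a * deriv (theta1 τ) 0 := by
    have hfun : (fun z => theta1 τ (z + ω)) = fun z => a * Complex.exp (c*z) * theta1 τ z :=
      funext htr
    refine HasDerivAt.unique hL ?_
    rw [hfun]
    exact hR
  rw [huniq]
  exact mul_ne_zero ha hP.2
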